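/- arXiv:2301.12906 — 2 statements merged into one kernel-verified Lean document; each statement's English description precedes it below -/
import Mathlib

section
/- If G' is obtained from a finite simple undirected graph G by deleting a single edge, then for any edge (i,j) that remains in G', the Forman–Ricci curvature F'(i,j) computed in G' satisfies F(i,j) - 2 ≤ F'(i,j) ≤ F(i,j) + 1. -/
/-!
Deleting edges only shrinks neighbourhoods. If the degrees of `i` and `j` drop by `s` in total
and their number of common neighbours drops by `τ`, then `F' - F = s - 3τ`; a common neighbour
can only be lost together with one of the removed incident edges, so `0 ≤ τ ≤ s`. Deleting a
single edge other than `ij` removes at most one edge at `i` or `j`, so `s ≤ 1` and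
`-2 ≤ s - 3τ ≤ 1`.
-/

open SimpleGraph Finset

def formanCurvature {V : Type*} [Fintype V] [DecidableEq V]
    (G : SimpleGraph V) [DecidableRel G.Adj] (i j : V) : ℤ :=
  4 - (G.degree i : ℤ) - (G.degree j : ℤ) +
    3 * ((G.neighborFinset i ∩ G.neighborFinset j).card : ℤ)

theorem Finset.card_inter_add_card_add_card_le {α : Type*} [DecidableEq α]
    {A A' B B' : Finset α} (hA : A' ⊆ A) (hB : B' ⊆ B) :
    #(A ∩ B) + #A' + #B' ≤ #(A' ∩ B') + #A + #B := by
  have hcover : A ∩ B ⊆ (A' ∩ B') ∪ (A \ A') ∪ (B \ B') := by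
    intro x hx
    simp only [mem_union, mem_inter, mem_sdiff] at hx ⊢
    tauto
  have := (card_le_card hcover).trans
    ((card_union_le _ _).trans (Nat.add_le_add_right (card_union_le _ _) _))
  rw [card_sdiff_of_subset hA, card_sdiff_of_subset hB] at this
  have := card_le_card hA
  have := card_le_card hB
  omega

namespace SimpleGraph

variable {V : Type*} [Fintype V]

theorem neighborFinset_subset_of_le {G H : SimpleGraph V} [DecidableRel G.Adj]
    [DecidableRel H.Adj] (h : H ≤ G) (v : V) : H.neighborFinset v ⊆ G.neighborFinset v :=
  fun _ hw => (mem_neighborFinset _ _ _).2 (h ((mem_neighborFinset _ _ _).1 hw))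

theorem formanCurvature_bounds_of_le [DecidableEq V] {G H : SimpleGraph V} [DecidableRel G.Adj]
    [DecidableRel H.Adj] (h : H ≤ G) {i j : V}
    (hdeg : G.degree i + G.degree j ≤ H.degree i + H.degree j + 1) :
    formanCurvature G i j - 2 ≤ formanCurvature H i j ∧
      formanCurvature H i j ≤ formanCurvature G i j + 1 := by
  have hi := neighborFinset_subset_of_le h i
  have hj := neighborFinset_subset_of_le h j
  have hlost := card_inter_add_card_add_card_le hi hj
  have hcommon := card_le_card (inter_subset_inter hi hj)
  have hdi := card_le_card hi
  have hdj := card_le_card hj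
  simp only [card_neighborFinset_eq_degree] at hlost hdi hdj
  unfold formanCurvature
  omega

variable {G : SimpleGraph V} {e : Sym2 V} [DecidableRel G.Adj]
  [DecidableRel (G.deleteEdges {e}).Adj]

theorem neighborFinset_deleteEdges_singleton_of_notMem {v : V} (hv : v ∉ e) :
    (G.deleteEdges {e}).neighborFinset v = G.neighborFinset v := by
  ext w
  simp only [mem_neighborFinset, deleteEdges_adj, Set.mem_singleton_iff, and_iff_left_iff_imp]
  rintro - rfl
  exact hv (Sym2.mem_mk_left v w)

theorem degree_deleteEdges_singleton_of_notMem {v : V} (hv : v ∉ e) :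
    (G.deleteEdges {e}).degree v = G.degree v := by
  simp only [← card_neighborFinset_eq_degree, neighborFinset_deleteEdges_singleton_of_notMem hv]

theorem degree_le_degree_deleteEdges_singleton_add_one [DecidableEq V] (v : V) :
    G.degree v ≤ (G.deleteEdges {e}).degree v + 1 := by
  by_cases hv : v ∈ e
  · obtain ⟨w, hw⟩ := Sym2.mem_iff_exists.1 hv
    have hsub : G.neighborFinset v ⊆ insert w ((G.deleteEdges {e}).neighborFinset v) := by
      intro x hx
      by_cases hxw : x = w
      · exact hxw ▸ mem_insert_self _ _
      · refine mem_insert_of_mem ((mem_neighborFinset _ _ _).2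
          (deleteEdges_adj.2 ⟨(mem_neighborFinset _ _ _).1 hx, ?_⟩))
        rwa [Set.mem_singleton_iff, hw, Sym2.congr_right]
    simpa only [card_neighborFinset_eq_degree] using
      (card_le_card hsub).trans (card_insert_le _ _)
  · exact (degree_deleteEdges_singleton_of_notMem hv).ge.trans (Nat.le_succ _)

theorem degree_add_degree_le_deleteEdges_singleton [DecidableEq V] {i j : V} (hij : i ≠ j)
    (he : s(i, j) ≠ e) :
    G.degree i + G.degree j ≤
      (G.deleteEdges {e}).degree i + (G.deleteEdges {e}).degree j + 1 := by
  by_cases hi : i ∈ e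
  · have hj : j ∉ e := fun hj => he ((Sym2.mem_and_mem_iff hij).1 ⟨hi, hj⟩).symm
    rw [degree_deleteEdges_singleton_of_notMem hj]
    have := degree_le_degree_deleteEdges_singleton_add_one (G := G) (e := e) i
    omega
  · rw [degree_deleteEdges_singleton_of_notMem hi]
    have := degree_le_degree_deleteEdges_singleton_add_one (G := G) (e := e) j
    omega

end SimpleGraph

theorem forman_stability_edge_deletion_general {V : Type*} [Fintype V] [DecidableEq V]
    (G G' : SimpleGraph V) [DecidableRel G.Adj] [DecidableRel G'.Adj]
    (istar jstar : V)
    (hdel : ∀ a b, G'.Adj a b ↔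
      G.Adj a b ∧ ¬ ((a = istar ∧ b = jstar) ∨ (a = jstar ∧ b = istar)))
    (i j : V) (hij : G'.Adj i j) :
    formanCurvature G i j - 2 ≤ formanCurvature G' i j ∧
      formanCurvature G' i j ≤ formanCurvature G i j + 1 := by
  obtain rfl : G' = G.deleteEdges {s(istar, jstar)} := by
    ext a b
    simp [hdel]
  have hne : s(i, j) ≠ s(istar, jstar) := (deleteEdges_adj.1 hij).2
  exact formanCurvature_bounds_of_le (deleteEdges_le _)
    (degree_add_degree_le_deleteEdges_singleton hij.ne hne)

/-- Deleting a single edge changes the Forman–Ricci curvature of any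
remaining edge by at least `-2` and at most `+1`. -/
theorem forman_stability_edge_deletion {V : Type*} [Fintype V] [DecidableEq V]
    (G G' : SimpleGraph V) [DecidableRel G.Adj] [DecidableRel G'.Adj]
    (istar jstar : V) (hadj : G.Adj istar jstar)
    (hdel : ∀ a b, G'.Adj a b ↔
      G.Adj a b ∧ ¬ ((a = istar ∧ b = jstar) ∨ (a = jstar ∧ b = istar)))
    (i j : V) (hij : G'.Adj i j) :
    formanCurvature G i j - 2 ≤ formanCurvature G' i j ∧
      formanCurvature G' i j ≤ formanCurvature G i j + 1 :=
  forman_stability_edge_deletion_general G G' istar jstar hdel i j hij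
end

section
/- Let G be a finite connected unweighted graph with m edges and let C(i,j) denote the expected commute time of the simple random walk between vertices i and j. Then C(i,j) = 2m·R_{ij}, where R_{ij} is the effective resistance between i and j. -/
open SimpleGraph Matrix Finset

/-- `B` is the Moore–Penrose pseudoinverse of `A`. -/
def IsMoorePenroseInverse {n : Type*} [Fintype n] [DecidableEq n]
    (A B : Matrix n n ℝ) : Prop :=
  A * B * A = A ∧ B * A * B = B ∧ (A * B)ᵀ = A * B ∧ (B * A)ᵀ = B * A

/-- Effective resistance `R_{ij} = (e_i - e_j)ᵀ Q† (e_i - e_j)`. -/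
noncomputable def effRes {V : Type*} [Fintype V] [DecidableEq V]
    (Qd : Matrix V V ℝ) (i j : V) : ℝ :=
  (Pi.single i (1 : ℝ) - Pi.single j 1) ⬝ᵥ (Qd *ᵥ (Pi.single i (1 : ℝ) - Pi.single j 1))

/-- `H i j` is the expected hitting time of the simple random walk on `G`
from `i` to `j`, characterised by the standard system of linear equations. -/
def IsHittingTime {V : Type*} [Fintype V] [DecidableEq V]
    (G : SimpleGraph V) [DecidableRel G.Adj] (H : V → V → ℝ) : Prop :=
  (∀ j, H j j = 0) ∧
    ∀ i j, i ≠ j → H i j = 1 + (∑ k ∈ G.neighborFinset i, H k j) / (G.degree i : ℝ)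

/-!
Fix the target `k` and let `h = H(·, k)`. The hitting-time equations say `(L h)(v) = deg v` for
`v ≠ k`; since the columns of the Laplacian `L` sum to zero, `(L h)(k) = deg k - 2m`, so
`L h = deg - 2m e_k`, and hence `L (H(·, j) - H(·, i)) = 2m (e_i - e_j)`. On a connected graph
`ker L` is the constants, so `L Q† L = L` gives `h(i) - h(j) = (e_i - e_j)ᵀ Q† L h`; applying this
to `H(·, j) - H(·, i)` yields `H(i, j) + H(j, i)` on the left and `2m R_ij` on the right.
-/

theorem Matrix.single_sub_single_dotProduct {V R : Type*} [Fintype V] [DecidableEq V] [Ring R]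
    (x y : V) (v : V → R) : (Pi.single x 1 - Pi.single y 1) ⬝ᵥ v = v x - v y := by
  rw [sub_dotProduct, single_dotProduct, single_dotProduct, one_mul, one_mul]

namespace SimpleGraph

variable {V : Type*} [Fintype V] [DecidableEq V] {G : SimpleGraph V} [DecidableRel G.Adj]

theorem sum_lapMatrix_mulVec {R : Type*} [CommRing R] (x : V → R) :
    ∑ v, (G.lapMatrix R *ᵥ x) v = 0 := by
  have hrow : (fun _ ↦ 1 : V → R) ᵥ* G.lapMatrix R = 0 := by
    rw [← G.isSymm_lapMatrix R, vecMul_transpose, lapMatrix_mulVec_const_eq_zero]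
  simpa [dotProduct, hrow] using dotProduct_mulVec (fun _ ↦ (1 : R)) (G.lapMatrix R) x

theorem IsHittingTime.lapMatrix_mulVec_apply_of_ne {H : V → V → ℝ} (hH : IsHittingTime G H)
    (hG : G.Preconnected) {v k : V} (hvk : v ≠ k) :
    (G.lapMatrix ℝ *ᵥ fun w ↦ H w k) v = G.degree v := by
  have hdeg : (0 : ℝ) < G.degree v := by exact_mod_cast (hG v k).degree_pos_left hvk
  rw [lapMatrix_mulVec_apply, hH.2 v k hvk]
  field_simp
  ring

theorem IsHittingTime.lapMatrix_mulVec {H : V → V → ℝ} (hH : IsHittingTime G H)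
    (hG : G.Preconnected) (k : V) :
    G.lapMatrix ℝ *ᵥ (fun w ↦ H w k) =
      (fun v ↦ (G.degree v : ℝ)) - (2 * #G.edgeFinset : ℝ) • Pi.single k 1 := by
  have hdegSum : ∑ v, (G.degree v : ℝ) = 2 * #G.edgeFinset := by
    exact_mod_cast G.sum_degrees_eq_twice_card_edges
  have hk : (G.lapMatrix ℝ *ᵥ fun w ↦ H w k) k = G.degree k - 2 * #G.edgeFinset := by
    have hsum := sum_lapMatrix_mulVec (G := G) fun w ↦ H w k
    rw [← add_sum_erase _ _ (mem_univ k),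
      sum_congr rfl fun v hv ↦ hH.lapMatrix_mulVec_apply_of_ne hG (ne_of_mem_erase hv),
      sum_erase_eq_sub (mem_univ k), hdegSum] at hsum
    linarith
  ext v
  obtain rfl | hvk := eq_or_ne v k
  · simpa using hk
  · simpa [hvk] using hH.lapMatrix_mulVec_apply_of_ne hG hvk

theorem Preconnected.single_sub_single_dotProduct_mulVec_lapMatrix (hG : G.Preconnected)
    {B : Matrix V V ℝ} (hB : G.lapMatrix ℝ * B * G.lapMatrix ℝ = G.lapMatrix ℝ)
    (f : V → ℝ) (x y : V) :
    (Pi.single x 1 - Pi.single y 1) ⬝ᵥ (B *ᵥ (G.lapMatrix ℝ *ᵥ f)) = f x - f y := by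
  have hker : G.lapMatrix ℝ *ᵥ (B *ᵥ (G.lapMatrix ℝ *ᵥ f) - f) = 0 := by
    rw [mulVec_sub, mulVec_mulVec, mulVec_mulVec, hB, sub_self]
  have hconst := (G.lapMatrix_mulVec_eq_zero_iff_forall_reachable).mp hker x y (hG x y)
  rw [single_sub_single_dotProduct]
  simp only [Pi.sub_apply] at hconst
  linarith

end SimpleGraph

/-- For a finite connected unweighted graph with `m` edges, the expected
commute time satisfies `C(i,j) = H(i,j) + H(j,i) = 2m · R_{ij}`. -/
theorem commuteTime_eq_two_m_effRes {V : Type*} [Fintype V] [DecidableEq V]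
    (G : SimpleGraph V) [DecidableRel G.Adj] (hconn : G.Connected)
    (H : V → V → ℝ) (hH : IsHittingTime G H)
    (Qd : Matrix V V ℝ) (hQd : IsMoorePenroseInverse (G.lapMatrix ℝ) Qd) :
    ∀ i j : V, H i j + H j i = 2 * (G.edgeFinset.card : ℝ) * effRes Qd i j := by
  intro i j
  set e : V → ℝ := Pi.single i 1 - Pi.single j 1
  have hrecover := hconn.preconnected.single_sub_single_dotProduct_mulVec_lapMatrix hQd.1
  have hdiff : G.lapMatrix ℝ *ᵥ (fun w ↦ H w j) - G.lapMatrix ℝ *ᵥ (fun w ↦ H w i) =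
      (2 * G.edgeFinset.card : ℝ) • e := by
    rw [hH.lapMatrix_mulVec hconn.preconnected, hH.lapMatrix_mulVec hconn.preconnected]
    module
  calc H i j + H j i = (H i j - H j j) - (H i i - H j i) := by rw [hH.1 i, hH.1 j]; ring
    _ = e ⬝ᵥ (Qd *ᵥ (G.lapMatrix ℝ *ᵥ (fun w ↦ H w j) - G.lapMatrix ℝ *ᵥ (fun w ↦ H w i))) := by
      rw [mulVec_sub, dotProduct_sub, hrecover, hrecover]
    _ = 2 * G.edgeFinset.card * effRes Qd i j := by
      rw [hdiff, mulVec_smul, dotProduct_smul, smul_eq_mul, effRes]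
end
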